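/- Let α = ∛3/2 (the real cube root of 3, divided by 2). There exists a constant c > 0 such that for all integers n₁, n₂, n₃ with n₁² + n₂² ≥ 1, one has ‖n₁α + n₂√2·α − n₃√2‖ > c/N⁵, where N = max{|n₁|, |n₂|, |n₃|}. -/

import Mathlib

/-!
Let `m` be the integer nearest to `β = n₁α + n₂√2α - n₃√2`. Then `2(β - m) = a∛3 + b` with
`a = n₁ + n₂√2 ≠ 0` and `b = -2(m + n₃√2)` in `ℤ[√2]`. Multiplying by `a²∛3² - ab∛3 + b²` gives
`γ = 3a³ + b³ ∈ ℤ[√2]`, which is nonzero because `∛3 ∉ ℚ(√2)`; so the norm `γγ̄` is a nonzero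
integer. The cofactor is `O(N²)` and the conjugate `γ̄` is `O(N³)`, whence `|a∛3 + b| ≫ N⁻⁵`.
-/

/-- The distance from a real number to the nearest integer, often denoted `‖x‖`. -/
noncomputable def nearestIntDist (x : ℝ) : ℝ := |x - round x|

open Zsqrtd

lemma two_ne_mul_self (n : ℤ) : (2 : ℤ) ≠ n * n := fun h =>
  Int.sq_ne_two_mod_four n (by rw [← h]; rfl)

noncomputable def sqrtTwoEmbedding : ℤ√2 →+* ℝ :=
  Zsqrtd.lift ⟨√2, by simp⟩

local notation "ι" => sqrtTwoEmbedding

lemma sqrtTwoEmbedding_apply (z : ℤ√2) : ι z = z.re + z.im * √2 := rfl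

lemma sqrtTwoEmbedding_injective : Function.Injective ι :=
  Zsqrtd.lift_injective _ two_ne_mul_self

lemma abs_sqrtTwoEmbedding_le (z : ℤ√2) : |ι z| ≤ |(z.re : ℝ)| + 2 * |(z.im : ℝ)| := by
  have h : √2 ≤ 2 := Real.sqrt_le_iff.mpr (by norm_num)
  calc |ι z| ≤ |(z.re : ℝ)| + |(z.im : ℝ) * √2| := abs_add_le _ _
    _ = |(z.re : ℝ)| + √2 * |(z.im : ℝ)| := by
        rw [abs_mul, abs_of_nonneg (Real.sqrt_nonneg 2), mul_comm]
    _ ≤ _ := by gcongr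

lemma abs_sqrtTwoEmbedding_star_le (z : ℤ√2) :
    |ι (star z)| ≤ |(z.re : ℝ)| + 2 * |(z.im : ℝ)| := by
  simpa using abs_sqrtTwoEmbedding_le (star z)

lemma one_le_abs_sqrtTwoEmbedding_mul_star {z : ℤ√2} (hz : z ≠ 0) :
    1 ≤ |ι z * ι (star z)| := by
  rw [← map_mul, ← norm_eq_mul_conj, map_intCast, ← Int.cast_abs]
  exact_mod_cast Int.one_le_abs ((norm_eq_zero two_ne_mul_self z).not.mpr hz)

section CubeRootOfThree

variable {θ : ℝ}

lemma pos_of_pow_three_eq_three (hθ : θ ^ 3 = 3) : 0 < θ := by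
  nlinarith [sq_nonneg θ]

lemma lt_two_of_pow_three_eq_three (hθ : θ ^ 3 = 3) : θ < 2 := by
  nlinarith [sq_nonneg (θ - 2), sq_nonneg (θ + 1)]

lemma irrational_of_pow_three_eq_three (hθ : θ ^ 3 = 3) : Irrational θ := by
  refine irrational_nrt_of_notint_nrt 3 3 (by exact_mod_cast hθ) ?_ (by norm_num)
  rintro ⟨k, rfl⟩
  have hk : k ^ 3 = 3 := by exact_mod_cast hθ
  have h1 : 1 < k := by nlinarith [sq_nonneg (k - 1), sq_nonneg (k + 1)]
  have h2 : k < 2 := by exact_mod_cast lt_two_of_pow_three_eq_three hθ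
  omega

lemma intCast_mul_ne_sqrtTwoEmbedding (hθ : θ ^ 3 = 3) {d : ℤ} (hd : d ≠ 0) (z : ℤ√2) :
    (d : ℝ) * θ ≠ ι z := by
  intro h
  have hcube : z ^ 3 = 3 * d ^ 3 := sqrtTwoEmbedding_injective <| by
    rw [map_pow, ← h, map_mul, map_pow, map_intCast, mul_pow, hθ, map_ofNat, mul_comm]
  have him : z.im * (3 * z.re ^ 2 + 2 * z.im ^ 2) = 0 := by
    have := congrArg Zsqrtd.im hcube
    simp only [pow_succ, pow_zero, one_mul, im_mul, re_mul, im_intCast, im_ofNat,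
      re_ofNat, mul_zero, zero_mul, add_zero] at this
    linear_combination this
  have him0 : z.im = 0 := by
    by_contra hne
    have : 0 < 3 * z.re ^ 2 + 2 * z.im ^ 2 := by positivity
    exact hne ((mul_eq_zero.mp him).resolve_right this.ne')
  refine irrational_of_pow_three_eq_three hθ ⟨z.re / d, ?_⟩
  rw [sqrtTwoEmbedding_apply, him0, Int.cast_zero, zero_mul, add_zero] at h
  push_cast
  field_simp
  linarith

lemma sqrtTwoEmbedding_mul_add_ne_zero (hθ : θ ^ 3 = 3) {A : ℤ√2} (hA : A ≠ 0) (B : ℤ√2) :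
    ι A * θ + ι B ≠ 0 := by
  intro h
  refine intCast_mul_ne_sqrtTwoEmbedding hθ ((norm_eq_zero two_ne_mul_self A).not.mpr hA)
    (-(B * star A)) ?_
  calc (A.norm : ℝ) * θ = ι A * θ * ι (star A) := by
        rw [← map_intCast ι, norm_eq_mul_conj, map_mul]; ring
    _ = ι (-(B * star A)) := by rw [eq_neg_of_add_eq_zero_left h, map_neg, map_mul]; ring

lemma one_le_mul_abs_sqrtTwoEmbedding_mul_add (hθ : θ ^ 3 = 3) {A : ℤ√2} (hA : A ≠ 0) (B : ℤ√2)
    {H : ℝ}(hAH : |(A.re : ℝ)| + 2 * |(A.im : ℝ)| ≤ H)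
    (hBH : |(B.re : ℝ)| + 2 * |(B.im : ℝ)| ≤ H) :
    1 ≤ 28 * H ^ 5 * |ι A * θ + ι B| := by
  set x := ι A * θ
  set y := ι B
  set γ := 3 * A ^ 3 + B ^ 3
  have hγ : ι γ = x ^ 3 + y ^ 3 := by
    simp only [γ, x, y, map_add, map_mul, map_pow, map_ofNat]; rw [mul_pow, hθ]; ring
  have hγ0 : γ ≠ 0 := by
    intro h
    refine sqrtTwoEmbedding_mul_add_ne_zero hθ hA B (eq_neg_iff_add_eq_zero.mp ?_)
    rw [← (Odd.pow_inj (by decide : Odd 3)), Odd.neg_pow (by decide)]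
    linear_combination hγ.symm.trans (by rw [h, map_zero])
  have hH : 0 ≤ H := le_trans (by positivity) hAH
  have hx : |x| ≤ 2 * H := by
    rw [abs_mul, abs_of_pos (pos_of_pow_three_eq_three hθ), mul_comm]
    exact mul_le_mul (lt_two_of_pow_three_eq_three hθ).le
      ((abs_sqrtTwoEmbedding_le A).trans hAH) (abs_nonneg _) zero_le_two
  have hy : |y| ≤ H := (abs_sqrtTwoEmbedding_le B).trans hBH
  have hP : |x ^ 2 - x * y + y ^ 2| ≤ 7 * H ^ 2 :=
    calc |x ^ 2 - x * y + y ^ 2| ≤ |x| ^ 2 + |x| * |y| + |y| ^ 2 := by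
          rw [← abs_mul, ← abs_pow, ← abs_pow]
          exact (abs_add_le _ _).trans (add_le_add_left (abs_sub _ _) _)
      _ ≤ (2 * H) ^ 2 + 2 * H * H + H ^ 2 := by gcongr
      _ = 7 * H ^ 2 := by ring
  have hstar : |ι (star γ)| ≤ 4 * H ^ 3 :=
    calc |ι (star γ)| ≤ 3 * |ι (star A)| ^ 3 + |ι (star B)| ^ 3 := by
          simp only [γ, star_add, star_mul', star_pow, star_ofNat, map_add, map_mul, map_pow,
            map_ofNat]
          refine (abs_add_le _ _).trans_eq ?_
          rw [abs_mul, abs_pow, abs_pow, abs_of_pos three_pos]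
      _ ≤ 3 * H ^ 3 + H ^ 3 := by
          gcongr
          · exact (abs_sqrtTwoEmbedding_star_le A).trans hAH
          · exact (abs_sqrtTwoEmbedding_star_le B).trans hBH
      _ = 4 * H ^ 3 := by ring
  calc 1 ≤ |ι γ * ι (star γ)| := one_le_abs_sqrtTwoEmbedding_mul_star hγ0
    _ = |x + y| * |x ^ 2 - x * y + y ^ 2| * |ι (star γ)| := by
        rw [hγ, ← abs_mul, ← abs_mul]; ring_nf
    _ ≤ |x + y| * (7 * H ^ 2) * (4 * H ^ 3) := by gcongr
    _ = 28 * H ^ 5 * |x + y| := by ring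

lemma one_le_mul_nearestIntDist (hθ : θ ^ 3 = 3) {n₁ n₂ n₃ : ℤ} (hn : n₁ ≠ 0 ∨ n₂ ≠ 0)
    {N : ℝ} (hN : 1 ≤ N) (h₁ : |(n₁ : ℝ)| ≤ N) (h₂ : |(n₂ : ℝ)| ≤ N) (h₃ : |(n₃ : ℝ)| ≤ N) :
    1 ≤ 56 * (16 * N) ^ 5 * nearestIntDist (n₁ * (θ / 2) + n₂ * √2 * (θ / 2) - n₃ * √2) := by
  set v := n₁ * (θ / 2) + n₂ * √2 * (θ / 2) - n₃ * √2
  set m := round v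
  have hA : (⟨n₁, n₂⟩ : ℤ√2) ≠ 0 := fun h =>
    hn.elim (· (congrArg Zsqrtd.re h)) (· (congrArg Zsqrtd.im h))
  have hθ0 : 0 < θ := pos_of_pow_three_eq_three hθ
  have hθ2 : θ / 2 ≤ 1 := by linarith [lt_two_of_pow_three_eq_three hθ]
  have hs : √2 ≤ 2 := Real.sqrt_le_iff.mpr (by norm_num)
  have hv : |v| ≤ 5 * N :=
    calc |v| ≤ |n₁ * (θ / 2)| + |n₂ * √2 * (θ / 2)| + |n₃ * √2| :=
          (abs_sub _ _).trans (add_le_add_left (abs_add_le _ _) _)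
      _ = |(n₁ : ℝ)| * (θ / 2) + |(n₂ : ℝ)| * √2 * (θ / 2) + |(n₃ : ℝ)| * √2 := by
          simp only [abs_mul, abs_of_pos (half_pos hθ0), abs_of_nonneg (Real.sqrt_nonneg 2)]
      _ ≤ N * 1 + N * 2 * 1 + N * 2 := by gcongr
      _ = 5 * N := by ring
  have hm : |(m : ℝ)| ≤ 6 * N := by
    have := abs_sub_round v
    calc |(m : ℝ)| ≤ |v| + |v - m| := by simpa using abs_sub v (v - m)
      _ ≤ 6 * N := by linarith
  have h2e : ι ⟨n₁, n₂⟩ * θ + ι ⟨-2 * m, -2 * n₃⟩ = 2 * (v - m) := by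
    simp only [sqrtTwoEmbedding_apply, v]; push_cast; ring
  have key := one_le_mul_abs_sqrtTwoEmbedding_mul_add hθ hA ⟨-2 * m, -2 * n₃⟩ (H := 16 * N)
    (by simp only; linarith) (by push_cast [abs_mul]; norm_num; linarith)
  rw [h2e, abs_mul, abs_two] at key
  unfold nearestIntDist
  linarith

end CubeRootOfThree

lemma one_le_max_abs {n₁ n₂ : ℤ} (hn : n₁ ≠ 0 ∨ n₂ ≠ 0) (n₃ : ℤ) :
    1 ≤ max |n₁| (max |n₂| |n₃|) := by
  rcases hn with h | h
  · exact (Int.one_le_abs h).trans (le_max_left _ _)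
  · exact (Int.one_le_abs h).trans ((le_max_left _ _).trans (le_max_right _ _))

/-- Lemma 3.1 of the paper: with `α = ∛3/2`, there is a constant `c > 0` such that
for all integers `n₁, n₂, n₃` with `n₁² + n₂² ≥ 1`,
`‖n₁α + n₂√2·α − n₃√2‖ > c/N⁵` where `N = max{|n₁|, |n₂|, |n₃|}`. -/
theorem liouville_type_inequality :
    ∃ c : ℝ, 0 < c ∧ ∀ n₁ n₂ n₃ : ℤ, 1 ≤ n₁ ^ 2 + n₂ ^ 2 →
      c / ((max |n₁| (max |n₂| |n₃|) : ℤ) : ℝ) ^ 5 <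
        nearestIntDist ((n₁ : ℝ) * ((3 : ℝ) ^ ((1 : ℝ) / 3) / 2)
          + (n₂ : ℝ) * Real.sqrt 2 * ((3 : ℝ) ^ ((1 : ℝ) / 3) / 2)
          - (n₃ : ℝ) * Real.sqrt 2) := by
  refine ⟨1 / 10 ^ 8, by norm_num, fun n₁ n₂ n₃ hn => ?_⟩
  have hθ : ((3 : ℝ) ^ ((1 : ℝ) / 3)) ^ 3 = 3 := by
    rw [← Real.rpow_natCast, ← Real.rpow_mul (by norm_num)]; norm_num
  have hn' : n₁ ≠ 0 ∨ n₂ ≠ 0 := by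
    by_contra! h
    rw [h.1, h.2] at hn
    norm_num at hn
  set N := max |n₁| (max |n₂| |n₃|)
  have hN : (1 : ℝ) ≤ N := by exact_mod_cast one_le_max_abs hn' n₃
  have key := one_le_mul_nearestIntDist hθ hn' hN
    (by rw [← Int.cast_abs]; exact_mod_cast le_max_left _ _)
    (by rw [← Int.cast_abs]; exact_mod_cast (le_max_left _ _).trans (le_max_right _ _))
    (by rw [← Int.cast_abs]; exact_mod_cast (le_max_right _ _).trans (le_max_right _ _))
  rw [div_lt_iff₀ (by positivity)]
  linarith
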